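/- arXiv:1305.2855 — 4 statements merged into one kernel-verified Lean document; each statement's English description precedes it below -/
import Mathlib

section
/- For the two-parameter family of Lie algebras g₄(α,β) with brackets [X,Z]=X, [X,W]=Y, [Y,Z]=Y, [Y,W]=αX+βY, the Levi-Civita connection satisfies ∇_X X = −Z, ∇_X Y = −((1+α)/2)W, ∇_X Z = X, ∇_X W = ((1+α)/2)Y, ∇_Y Y = −(Z+βW), ∇_Y Z = Y, ∇_Y W = ((1+α)/2)X + βY, ∇_Y X = −((1+α)/2)W, ∇_W X = ((α−1)/2)Y, ∇_W Y = ((1−α)/2)X, and ∇_Z acts as zero on all basis vectors, ∇_W Z = ∇_W W = 0. -/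
open Real

abbrev V4 := Fin 4 → ℝ

/-- the inner product making the basis orthonormal -/
def ip (u v : V4) : ℝ := u 0 * v 0 + u 1 * v 1 + u 2 * v 2 + u 3 * v 3

def X : V4 := ![1, 0, 0, 0]
def Y : V4 := ![0, 1, 0, 0]
def Z : V4 := ![0, 0, 1, 0]
def W : V4 := ![0, 0, 0, 1]

def e : Fin 4 → V4 := ![X, Y, Z, W]

def br (α β : ℝ) (u v : V4) : V4 := (u 0 * v 2 - u 2 * v 0) • X + (u 0 * v 3 - u 3 * v 0) • Y + (u 1 * v 2 - u 2 * v 1) • Y + (u 1 * v 3 - u 3 * v 1) • (α • X + β • Y)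


lemma key (α β : ℝ) (nabla : V4 → V4 → V4)
    (hK : ∀ u v w : V4, 2 * ip (nabla u v) w = ip (br α β u v) w - ip (br α β v w) u + ip (br α β w u) v)
    (u v t : V4)
    (h : ∀ w : V4, 2 * ip t w = ip (br α β u v) w - ip (br α β v w) u + ip (br α β w u) v) :
    nabla u v = t := by
  funext i
  have h1 := hK u v (e i)
  have h2 := h (e i)
  have h3 : 2 * ip (nabla u v) (e i) = 2 * ip t (e i) := by rw [h1, h2]
  fin_cases i <;>
  · simp [ip, e, X, Y, Z, W, Matrix.vecHead, Matrix.vecTail] at h3 ⊢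
    linarith

theorem stmt8 (α β : ℝ) (nabla : V4 → V4 → V4)
    (hK : ∀ u v w : V4, 2 * ip (nabla u v) w = ip (br α β u v) w - ip (br α β v w) u + ip (br α β w u) v) :
    nabla X X = -Z ∧ nabla X Y = -(((1 + α)/2 : ℝ) • W) ∧
    nabla X Z = X ∧ nabla X W = ((1 + α)/2 : ℝ) • Y ∧
    nabla Y X = -(((1 + α)/2 : ℝ) • W) ∧ nabla Y Y = -(Z + β • W) ∧
    nabla Y Z = Y ∧ nabla Y W = ((1 + α)/2 : ℝ) • X + β • Y ∧
    nabla Z X = 0 ∧ nabla Z Y = 0 ∧ nabla Z Z = 0 ∧ nabla Z W = 0 ∧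
    nabla W X = ((α - 1)/2 : ℝ) • Y ∧ nabla W Y = ((1 - α)/2 : ℝ) • X ∧
    nabla W Z = 0 ∧ nabla W W = 0 := by
  refine ⟨?_,?_,?_,?_,?_,?_,?_,?_,?_,?_,?_,?_,?_,?_,?_,?_⟩ <;>
  · apply key α β nabla hK
    intro w
    simp [ip, br, X, Y, Z, W]
    try ring
end

section
/- For the Lie algebra g₄(α,β), the curvature tensor satisfies R(X,Y)Y = ((1+α)²−4)/4 · X, R(X,Z)Z = −X, R(X,W)W = ((α+1)(α−3)/4)X − βY, and R(Y,W)W = (−3α²−4β²−2α+1)/4 · Y − βX. -/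
set_option maxHeartbeats 2000000


open Real

theorem stmt9 (α β : ℝ) (nabla : V4 → V4 → V4)
    (hK : ∀ u v w : V4, 2 * ip (nabla u v) w = ip (br α β u v) w - ip (br α β v w) u + ip (br α β w u) v)
    (R : V4 → V4 → V4 → V4)
    (hR : ∀ u v w : V4, R u v w = nabla u (nabla v w) - nabla v (nabla u w) - nabla (br α β u v) w) :
    R X Y Y = (((1 + α) ^ 2 - 4)/4 : ℝ) • X ∧
    R X Z Z = -X ∧
    R X W W = ((α + 1) * (α - 3)/4 : ℝ) • X - β • Y ∧
    R Y W W = ((-3 * α ^ 2 - 4 * β ^ 2 - 2 * α + 1)/4 : ℝ) • Y - β • X := by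
  have hcomp : ∀ u v : V4, nabla u v = fun i =>
      (ip (br α β u v) (e i) - ip (br α β v (e i)) u + ip (br α β (e i) u) v) / 2 := by
    intro u v
    funext i
    have h := hK u v (e i)
    have hi : ip (nabla u v) (e i) = nabla u v i := by
      fin_cases i <;> simp [ip, e, X, Y, Z, W, Matrix.vecHead, Matrix.vecTail]
    rw [hi] at h
    linarith
  refine ⟨?_, ?_, ?_, ?_⟩ <;>
  · rw [hR]
    simp only [hcomp]
    funext i
    fin_cases i <;>
      simp [ip, br, e, X, Y, Z, W, Matrix.vecHead, Matrix.vecTail] <;>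
      ring
end

section
/- For the Lie algebra g₄(α,β), the scalar curvature is the constant −(1+α)²/2 − 2β² − 6, which is strictly negative for all real α,β. -/
/-!
The Koszul formula determines the Levi-Civita connection uniquely, since the basis is
orthonormal: the `i`-th coordinate of `∇ᵤ v` is half the right-hand side of the formula
tested against `e i`. Computing the curvature of this connection on the basis gives the
sectional curvatures `K(X,Y) = (α + 3)(α - 1)/4`, `K(X,Z) = K(Y,Z) = -1`,
`K(X,W) = (α - 1)²/4 - 1`, `K(Y,W) = (1 - 2α - 3α²)/4 - β²` and `K(Z,W) = 0`, whose sum is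
`-(1 + α)²/4 - β² - 3`; the scalar curvature counts every plane twice.
-/

open Real

lemma ip_e_right (v : V4) (i : Fin 4) : ip v (e i) = v i := by
  fin_cases i <;> simp [ip, e, X, Y, Z, W]

lemma ip_e_e (j k : Fin 4) : ip (e j) (e k) = if j = k then 1 else 0 := by
  rw [ip_e_right]
  fin_cases j <;> fin_cases k <;> simp [e, X, Y, Z, W]

noncomputable def leviCivita (α β : ℝ) (u v : V4) : V4 :=
  fun i => (ip (br α β u v) (e i) - ip (br α β v (e i)) u + ip (br α β (e i) u) v) / 2

lemma eq_leviCivita_of_koszul {α β : ℝ} {nabla : V4 → V4 → V4}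
    (hK : ∀ u v w : V4,
      2 * ip (nabla u v) w = ip (br α β u v) w - ip (br α β v w) u + ip (br α β w u) v) :
    nabla = leviCivita α β := by
  funext u v i
  have h := hK u v (e i)
  rw [ip_e_right] at h
  rw [leviCivita]
  linarith

lemma br_eq (α β : ℝ) (u v : V4) :
    br α β u v = ![u 0 * v 2 - u 2 * v 0 + α * (u 1 * v 3 - u 3 * v 1),
      u 0 * v 3 - u 3 * v 0 + (u 1 * v 2 - u 2 * v 1) + β * (u 1 * v 3 - u 3 * v 1), 0, 0] := by
  funext i
  fin_cases i <;> simp [br, X, Y] <;> ring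

lemma leviCivita_eq (α β : ℝ) (u v : V4) :
    leviCivita α β u v = ![u 0 * v 2 + (1 + α) / 2 * u 1 * v 3 - (α - 1) / 2 * u 3 * v 1,
      (1 + α) / 2 * u 0 * v 3 + u 1 * v 2 + β * u 1 * v 3 + (α - 1) / 2 * u 3 * v 0,
      -(u 0 * v 0) - u 1 * v 1,
      -((1 + α) / 2 * (u 0 * v 1 + u 1 * v 0)) - β * u 1 * v 1] := by
  funext i
  fin_cases i <;> simp [leviCivita, br_eq, ip, e, X, Y, Z, W] <;> ring

noncomputable def curvature (α β : ℝ) (u v w : V4) : V4 :=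
  leviCivita α β u (leviCivita α β v w) - leviCivita α β v (leviCivita α β u w) -
    leviCivita α β (br α β u v) w

noncomputable def sectionalCurvature (α β : ℝ) (j k : Fin 4) : ℝ :=
  ip (curvature α β (e k) (e j) (e j)) (e k)

lemma sectionalCurvature_eq (α β : ℝ) :
    sectionalCurvature α β = !![0, (α + 3) * (α - 1) / 4, -1, (α - 1) ^ 2 / 4 - 1;
      (α + 3) * (α - 1) / 4, 0, -1, (1 - 2 * α - 3 * α ^ 2) / 4 - β ^ 2;
      -1, -1, 0, 0;
      (α - 1) ^ 2 / 4 - 1, (1 - 2 * α - 3 * α ^ 2) / 4 - β ^ 2, 0, 0] := by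
  ext j k
  fin_cases j <;> fin_cases k <;>
    simp [sectionalCurvature, curvature, leviCivita_eq, br_eq, ip, e, X, Y, Z, W] <;> ring

theorem stmt10 (α β : ℝ) (nabla : V4 → V4 → V4)
    (hK : ∀ u v w : V4, 2 * ip (nabla u v) w = ip (br α β u v) w - ip (br α β v w) u + ip (br α β w u) v)
    (R : V4 → V4 → V4 → V4)
    (hR : ∀ u v w : V4, R u v w = nabla u (nabla v w) - nabla v (nabla u w) - nabla (br α β u v) w) :
    (∑ j : Fin 4, ∑ k : Fin 4, if j ≠ k then ip (R (e k) (e j) (e j)) (e k) / (ip (e j) (e j) * ip (e k) (e k) - ip (e j) (e k) ^ 2) else 0) = -((1 + α) ^ 2)/2 - 2 * β ^ 2 - 6 ∧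
    -((1 + α) ^ 2)/2 - 2 * β ^ 2 - 6 < 0 := by
  obtain rfl := eq_leviCivita_of_koszul hK
  obtain rfl : R = curvature α β := funext fun u => funext fun v => funext (hR u v)
  refine ⟨?_, by nlinarith [sq_nonneg (1 + α), sq_nonneg β]⟩
  have hsummand (j k : Fin 4) : (if j ≠ k then ip (curvature α β (e k) (e j) (e j)) (e k) /
      (ip (e j) (e j) * ip (e k) (e k) - ip (e j) (e k) ^ 2) else 0) =
      sectionalCurvature α β j k := by
    by_cases hjk : j = k
    · subst hjk
      fin_cases j <;> simp [sectionalCurvature_eq]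
    · simp [hjk, ip_e_e, sectionalCurvature]
  simp only [hsummand, sectionalCurvature_eq, Fin.sum_univ_four, Matrix.of_apply, Matrix.cons_val',
    Matrix.cons_val_fin_one, Matrix.cons_val_zero, Matrix.cons_val_one, Matrix.cons_val]
  ring
end

section
/- In the Lie algebra g₄(α,β), there exists a nonzero vector Q with ∇_U Q = 0 for all U ∈ g₄ if and only if α = −1 and β = 0; in that case the parallel vectors are exactly the multiples of W. -/
open Real

theorem stmt18 (α β : ℝ) (nabla : V4 → V4 → V4)
    (hK : ∀ u v w : V4, 2 * ip (nabla u v) w = ip (br α β u v) w - ip (br α β v w) u + ip (br α β w u) v) :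
    ((∃ Q : V4, Q ≠ 0 ∧ ∀ u : V4, nabla u Q = 0) ↔ (α = -1 ∧ β = 0)) ∧
    (α = -1 → β = 0 →
      ∀ Q : V4, (∀ u : V4, nabla u Q = 0) ↔ ∃ q : ℝ, Q = q • W) := by
  have h0 : ∀ u v : V4, 2 * nabla u v 0 = 2*(u 0 * v 2) + (α+1)*(u 1 * v 3) + (1-α)*(u 3 * v 1) := by
    intro u v
    have h := hK u v X
    simp [ip, br, X, Y, Z, W] at h ⊢
    linear_combination h
  have h1 : ∀ u v : V4, 2 * nabla u v 1 = (1+α)*(u 0 * v 3) + (α-1)*(u 3 * v 0) + 2*(u 1 * v 2) + 2*β*(u 1 * v 3) := by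
    intro u v
    have h := hK u v Y
    simp [ip, br, X, Y, Z, W] at h ⊢
    linear_combination h
  have h2 : ∀ u v : V4, 2 * nabla u v 2 = -2*(u 0 * v 0) - 2*(u 1 * v 1) := by
    intro u v
    have h := hK u v Z
    simp [ip, br, X, Y, Z, W] at h ⊢
    linear_combination h
  have h3 : ∀ u v : V4, 2 * nabla u v 3 = -(1+α)*(u 0 * v 1 + u 1 * v 0) - 2*β*(u 1 * v 1) := by
    intro u v
    have h := hK u v W
    simp [ip, br, X, Y, Z, W] at h ⊢
    linear_combination h
  -- if Q is parallel then Q 0 = Q 1 = Q 2 = 0 and (1+α) Q 3 = 0 and β Q 3 = 0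
  have key : ∀ Q : V4, (∀ u : V4, nabla u Q = 0) →
      Q 0 = 0 ∧ Q 1 = 0 ∧ Q 2 = 0 ∧ (1+α) * Q 3 = 0 ∧ β * Q 3 = 0 := by
    intro Q hP
    have eX2 := h2 X Q; rw [congrFun (hP X) 2] at eX2; simp [X] at eX2
    have eY2 := h2 Y Q; rw [congrFun (hP Y) 2] at eY2; simp [Y] at eY2
    have eX0 := h0 X Q; rw [congrFun (hP X) 0] at eX0; simp [X] at eX0
    have eX1 := h1 X Q; rw [congrFun (hP X) 1] at eX1; simp [X] at eX1
    have eY1 := h1 Y Q; rw [congrFun (hP Y) 1] at eY1; simp [Y] at eY1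
    refine ⟨by linarith, by linarith, by linarith, mul_eq_zero.mpr eX1, ?_⟩
    -- from eY1 : 0 = 2 Q2 + 2 β Q3, and Q2 = 0
    have hQ2 : Q 2 = 0 := by linarith
    rw [hQ2] at eY1
    linarith
  -- converse : if α = -1 and β = 0 then q • W is parallel
  have conv : α = -1 → β = 0 → ∀ (q : ℝ) (u : V4), nabla u (q • W) = 0 := by
    intro hα hβ q u
    funext i
    have e0 := h0 u (q • W); have e1 := h1 u (q • W)
    have e2 := h2 u (q • W); have e3 := h3 u (q • W)
    simp [W, hα, hβ] at e0 e1 e2 e3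
    fin_cases i <;> simp [W] <;> linarith
  constructor
  · constructor
    · rintro ⟨Q, hQne, hP⟩
      obtain ⟨q0, q1, q2, q3a, q3b⟩ := key Q hP
      have hQ3 : Q 3 ≠ 0 := by
        intro h3z
        apply hQne
        funext i
        fin_cases i <;> simpa using (by assumption : _ = (0:ℝ))
      constructor
      · have := mul_eq_zero.mp q3a
        rcases this with h | h
        · linarith
        · exact absurd h hQ3
      · rcases mul_eq_zero.mp q3b with h | h
        · exact h
        · exact absurd h hQ3
    · rintro ⟨hα, hβ⟩
      have hWne : W ≠ 0 := by
        intro h; have := congrFun h 3; simp [W] at this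
      exact ⟨W, hWne, fun u => by have := conv hα hβ 1 u; simpa using this⟩
  · intro hα hβ Q
    constructor
    · intro hP
      obtain ⟨q0, q1, q2, _, _⟩ := key Q hP
      refine ⟨Q 3, ?_⟩
      funext i
      fin_cases i <;> simp [W] <;> assumption
    · rintro ⟨q, rfl⟩
      exact conv hα hβ q
end
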